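/- arXiv:1502.07847 — 7 statements merged into one kernel-verified Lean document; each statement's English description precedes it below -/
import Mathlib

section
/- Let Y, Z, W_ij ∈ ℂ and W_ii, W_jj ∈ ℝ with Y ≠ 0 and Z = Y⁻¹, and define S_ij = conj(Y)·W_ii − conj(Y)·W_ij and S_ji = conj(Y)·W_jj − conj(Y)·conj(W_ij) (real numbers coerced to ℂ). Then |W_ij|² ≤ W_ii·W_jj holds if and only if there exists l ∈ ℝ such that S_ij + S_ji = Z·l and |S_ij|² ≤ W_ii·l. -/
/-!
With `r = Wᵢᵢ + Wⱼⱼ - 2 Re Wᵢⱼ` one has `Sᵢⱼ = conj Y (Wᵢᵢ - Wᵢⱼ)` and `Sᵢⱼ + Sⱼᵢ = conj Y r`, so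
the equation `Sᵢⱼ + Sⱼᵢ = Z l` forces `l = |Y|² r`, and the cone condition `|Sᵢⱼ|² ≤ Wᵢᵢ l`
cancels to `|Wᵢᵢ - Wᵢⱼ|² ≤ Wᵢᵢ r`. Expanding the square, this differs from `|Wᵢⱼ|² ≤ Wᵢᵢ Wⱼⱼ`
by adding `Wᵢᵢ² - 2 Wᵢᵢ Re Wᵢⱼ` to both sides.
-/

open Complex ComplexConjugate

namespace Complex

theorem ofReal_sub_add_ofReal_sub_conj (a b : ℝ) (w : ℂ) :
    (a - w) + (b - conj w) = ((a + b - 2 * w.re : ℝ) : ℂ) := by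
  apply Complex.ext <;> simp; ring

theorem normSq_ofReal_sub_le_iff (a b : ℝ) (w : ℂ) :
    normSq (a - w) ≤ a * (a + b - 2 * w.re) ↔ normSq w ≤ a * b := by
  rw [normSq_sub, normSq_ofReal, re_ofReal_mul, conj_re]
  constructor <;> intro h <;> linarith

theorem conj_mul_eq_inv_mul_iff {y : ℂ} (hy : y ≠ 0) (z w : ℂ) :
    conj y * z = y⁻¹ * w ↔ w = normSq y * z := by
  rw [eq_inv_mul_iff_mul_eq₀ hy, ← mul_assoc, mul_conj, eq_comm]

end Complex

/-- Theorem 1: the W-SOC constraint is equivalent to the C-SOC system. -/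
theorem wsoc_iff_csoc (Y Z Wij Sij Sji : ℂ) (Wii Wjj : ℝ)
    (hY : Y ≠ 0) (hZ : Z = Y⁻¹)
    (hSij : Sij = (starRingEnd ℂ) Y * (Wii : ℂ) - (starRingEnd ℂ) Y * Wij)
    (hSji : Sji = (starRingEnd ℂ) Y * (Wjj : ℂ) - (starRingEnd ℂ) Y * (starRingEnd ℂ) Wij) :
    ‖Wij‖ ^ 2 ≤ Wii * Wjj ↔
      ∃ l : ℝ, Sij + Sji = Z * (l : ℂ) ∧ ‖Sij‖ ^ 2 ≤ Wii * l := by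
  set r : ℝ := Wii + Wjj - 2 * Wij.re
  have hS : Sij = conj Y * (Wii - Wij) := by rw [hSij]; ring
  have hsum : Sij + Sji = conj Y * r := by
    rw [← ofReal_sub_add_ofReal_sub_conj, hSij, hSji]; ring
  have hl (l : ℝ) : Sij + Sji = Z * l ↔ l = normSq Y * r := by
    rw [hsum, hZ, conj_mul_eq_inv_mul_iff hY]; norm_cast
  calc ‖Wij‖ ^ 2 ≤ Wii * Wjj ↔ normSq (Wii - Wij) ≤ Wii * r := by
        rw [Complex.sq_norm, normSq_ofReal_sub_le_iff]
    _ ↔ normSq Y * normSq (Wii - Wij) ≤ Wii * (normSq Y * r) := by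
        rw [mul_left_comm, mul_le_mul_iff_right₀ (normSq_pos.mpr hY)]
    _ ↔ ∃ l : ℝ, Sij + Sji = Z * l ∧ ‖Sij‖ ^ 2 ≤ Wii * l := by
        simp only [hl, exists_eq_left]
        rw [hS, Complex.sq_norm, normSq_mul, normSq_conj]
end

section
/- Let Y, Z, W_ij, S_ij, S_ji ∈ ℂ and W_ii, W_jj, l ∈ ℝ with Y ≠ 0 and Z = Y⁻¹. Assume S_ij = conj(Y)·W_ii − conj(Y)·W_ij, S_ji = conj(Y)·W_jj − conj(Y)·conj(W_ij), S_ij + S_ji = Z·l, and |S_ij|² ≤ W_ii·l. Then |W_ij|² ≤ W_ii·W_jj. -/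
/-!
Write `c = W_ii + W_jj - 2 Re W_ij`. The power flow equations give `S_ij + S_ji = conj Y * c`, so the
line-loss equation forces `l = |Y|² c`, while `|S_ij|² = |Y|² |W_ii - W_ij|²`. After cancelling
`|Y|² > 0` the current-based cone constraint reads `|W_ii - W_ij|² ≤ W_ii c`, and expanding the left
side shows this is exactly `|W_ij|² ≤ W_ii W_jj`.
-/

open ComplexConjugate

namespace Complex

lemma normSq_ofReal_sub (a : ℝ) (w : ℂ) :
    normSq (a - w) = a ^ 2 - 2 * a * w.re + normSq w := by
  simp only [normSq_apply, sub_re, sub_im, ofReal_re, ofReal_im]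
  ring

lemma normSq_le_mul_of_normSq_ofReal_sub_le {a b : ℝ} {w : ℂ}
    (h : normSq (a - w) ≤ a * (a + b - 2 * w.re)) : normSq w ≤ a * b := by
  rw [normSq_ofReal_sub] at h
  linarith

lemma conj_mul_ofReal_sub_add_conj_mul_ofReal_sub_conj (y w : ℂ) (a b : ℝ) :
    conj y * a - conj y * w + (conj y * b - conj y * conj w)
      = conj y * ((a + b - 2 * w.re : ℝ) : ℂ) := by
  have hw : w + conj w = 2 * (w.re : ℂ) := by rw [add_conj]; push_cast; ring
  push_cast
  linear_combination (-conj y) * hw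

lemma eq_normSq_mul_of_conj_mul_eq_inv_mul {y : ℂ} (hy : y ≠ 0) {c l : ℝ}
    (h : conj y * c = y⁻¹ * l) : l = normSq y * c := by
  have hl : (l : ℂ) = normSq y * c := by
    rw [← mul_conj, mul_assoc, h, mul_inv_cancel_left₀ hy]
  exact_mod_cast hl

lemma normSq_conj_mul_ofReal_sub (y w : ℂ) (a : ℝ) :
    normSq (conj y * a - conj y * w) = normSq y * normSq (a - w) := by
  rw [← mul_sub, normSq_mul, normSq_conj]

end Complex

open Complex

/-- Property (3) of Theorem 2 (QC ⊆ SOC). -/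
theorem qc_subset_soc (Y Z Wij Sij Sji : ℂ) (Wii Wjj l : ℝ)
    (hY : Y ≠ 0) (hZ : Z = Y⁻¹)
    (hSij : Sij = (starRingEnd ℂ) Y * (Wii : ℂ) - (starRingEnd ℂ) Y * Wij)
    (hSji : Sji = (starRingEnd ℂ) Y * (Wjj : ℂ) - (starRingEnd ℂ) Y * (starRingEnd ℂ) Wij)
    (hloss : Sij + Sji = Z * (l : ℂ))
    (hsoc : ‖Sij‖ ^ 2 ≤ Wii * l) :
    ‖Wij‖ ^ 2 ≤ Wii * Wjj := by
  have hl : l = normSq Y * (Wii + Wjj - 2 * Wij.re) := by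
    apply eq_normSq_mul_of_conj_mul_eq_inv_mul hY
    rw [← conj_mul_ofReal_sub_add_conj_mul_ofReal_sub_conj, ← hSij, ← hSji, hloss, hZ]
  rw [← normSq_eq_norm_sq, hSij, normSq_conj_mul_ofReal_sub, hl, mul_left_comm] at hsoc
  rw [← normSq_eq_norm_sq]
  exact normSq_le_mul_of_normSq_ofReal_sub_le (le_of_mul_le_mul_left hsoc (normSq_pos.2 hY))
end

section
/- Let u, x ∈ ℝ with 0 < u ≤ π/2 and |x| ≤ u. Then cos(u/2)·(x + u/2) − sin(u/2) ≤ sin(x) and sin(x) ≤ cos(u/2)·(x − u/2) + sin(u/2). -/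
/-!
Both affine functions are tangents of `sin`: the lower one at `-u/2`, the upper one at `u/2`, and
`x ↦ -x` exchanges the two bounds. On `[-u, 0]` the lower bound holds because `sin` is convex there.
On `[0, u]`, where `sin` is concave, it suffices to check the two endpoints; at `x = u` this is
`3 t cos t ≤ sin t + sin 2t` for `t = u/2 ≤ π/4`, whose two sides agree up to order `t⁵`, so it
follows from the Taylor bounds `t - t³/6 ≤ sin t` and `cos t ≤ 1 - t²/2 + 5t⁴/96`.
-/

open Real Set

theorem ConcaveOn.le_add_mul_sub_of_hasDerivAt {S : Set ℝ} {f : ℝ → ℝ} {f' a y : ℝ}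
    (hf : ConcaveOn ℝ S f) (ha : a ∈ S) (hy : y ∈ S) (hf' : HasDerivAt f f' a) :
    f y ≤ f a + f' * (y - a) := by
  rcases lt_trichotomy a y with hay | rfl | hya
  · have h := hf.slope_le_of_hasDerivAt ha hy hay hf'
    rw [slope_def_field, div_le_iff₀ (sub_pos.2 hay)] at h
    linarith
  · simp
  · have h := hf.le_slope_of_hasDerivAt hy ha hya hf'
    rw [slope_def_field, le_div_iff₀ (sub_pos.2 hya)] at h
    linarith

theorem ConcaveOn.mul_add_le_of_mem_segment {𝕜 : Type*} [Field 𝕜] [LinearOrder 𝕜]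
    [IsStrictOrderedRing 𝕜] {s : Set 𝕜} {f : 𝕜 → 𝕜} {x y z m k : 𝕜} (hf : ConcaveOn 𝕜 s f)
    (hx : x ∈ s) (hy : y ∈ s) (hfx : m * x + k ≤ f x) (hfy : m * y + k ≤ f y)
    (hz : z ∈ segment 𝕜 x y) : m * z + k ≤ f z := by
  obtain ⟨a, b, ha, hb, hab, rfl⟩ := hz
  calc m * (a • x + b • y) + k = a * (m * x + k) + b * (m * y + k) := by
        simp only [smul_eq_mul]
        linear_combination (-k) * hab
    _ ≤ a * f x + b * f y := by gcongr
    _ ≤ f (a • x + b • y) := hf.2 hx hy ha hb hab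

namespace Real

theorem sin_le_sin_add_cos_mul_sub {a y : ℝ} (ha : a ∈ Icc 0 π) (hy : y ∈ Icc 0 π) :
    sin y ≤ sin a + cos a * (y - a) :=
  strictConcaveOn_sin_Icc.concaveOn.le_add_mul_sub_of_hasDerivAt ha hy (hasDerivAt_sin a)

theorem three_mul_mul_cos_le_sin_add_sin_two_mul {t : ℝ} (h0 : 0 ≤ t) (h1 : t ≤ 1) :
    3 * t * cos t ≤ sin t + sin (2 * t) := by
  have hsin : t - t ^ 3 / 6 ≤ sin t := sin_ge_sub_cube h0
  have hcos : cos t ≤ 1 - t ^ 2 / 2 + t ^ 4 * (5 / 96) := by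
    have h := cos_bound (x := t) (by rwa [abs_of_nonneg h0])
    rw [abs_of_nonneg h0] at h
    linarith [(abs_le.1 h).2]
  have hcos_nonneg : 0 ≤ cos t := by nlinarith [one_sub_sq_div_two_le_cos (x := t)]
  -- `(t - t³/6)(1 + 2c) - 3tc ≥ (t - t³/6) - (1 - t²/2 + 5t⁴/96)(t + t³/3) = t⁵(11/96 - 5t²/288)`
  have hpoly : 3 * t * cos t ≤ (t - t ^ 3 / 6) * (1 + 2 * cos t) := by
    have h := mul_le_mul_of_nonneg_right hcos (by positivity : 0 ≤ t + t ^ 3 / 3)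
    have hrem : 0 ≤ t ^ 5 * (11 / 96 - 5 * t ^ 2 / 288) :=
      mul_nonneg (pow_nonneg h0 5) (by nlinarith)
    nlinarith
  calc 3 * t * cos t ≤ (t - t ^ 3 / 6) * (1 + 2 * cos t) := hpoly
    _ ≤ sin t * (1 + 2 * cos t) := mul_le_mul_of_nonneg_right hsin (by linarith)
    _ = sin t + sin (2 * t) := by rw [sin_two_mul]; ring

theorem cos_half_mul_add_half_sub_sin_half_le_sin {u x : ℝ} (hu : u ≤ π / 2) (hx : |x| ≤ u) :
    cos (u / 2) * (x + u / 2) - sin (u / 2) ≤ sin x := by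
  obtain ⟨hxl, hxu⟩ := abs_le.1 hx
  have hπ := pi_pos
  have hmid : u / 2 ∈ Icc 0 π := ⟨by linarith, by linarith⟩
  rcases le_total x 0 with hx0 | hx0
  · have h := sin_le_sin_add_cos_mul_sub hmid (y := -x) ⟨by linarith, by linarith⟩
    rw [sin_neg] at h
    linarith
  · have hat0 := sin_le_sin_add_cos_mul_sub hmid (y := 0) ⟨le_rfl, hπ.le⟩
    have hatu := three_mul_mul_cos_le_sin_add_sin_two_mul (t := u / 2) (by linarith)
      (by linarith [pi_lt_four])
    rw [show 2 * (u / 2) = u by ring] at hatu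
    have h := strictConcaveOn_sin_Icc.concaveOn.mul_add_le_of_mem_segment
      (m := cos (u / 2)) (k := cos (u / 2) * (u / 2) - sin (u / 2))
      (x := 0) (y := u) ⟨le_rfl, hπ.le⟩ ⟨by linarith, by linarith⟩
      (by rw [sin_zero] at hat0 ⊢; linarith) (by linarith)
      (by rw [segment_eq_Icc (by linarith)]; exact ⟨hx0, hxu⟩)
    linarith

end Real

theorem sin_envelope_general (u x : ℝ) (hu1 : u ≤ Real.pi / 2)
    (hx : |x| ≤ u) :
    Real.cos (u / 2) * (x + u / 2) - Real.sin (u / 2) ≤ Real.sin x ∧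
      Real.sin x ≤ Real.cos (u / 2) * (x - u / 2) + Real.sin (u / 2) := by
  refine ⟨Real.cos_half_mul_add_half_sub_sin_half_le_sin hu1 hx, ?_⟩
  have h := Real.cos_half_mul_add_half_sub_sin_half_le_sin hu1 (x := -x) (by rwa [abs_neg])
  rw [Real.sin_neg] at h
  linarith

/-- Validity of the sine convex envelope. -/
theorem sin_envelope (u x : ℝ) (hu0 : 0 < u) (hu1 : u ≤ Real.pi / 2)
    (hx : |x| ≤ u) :
    Real.cos (u / 2) * (x + u / 2) - Real.sin (u / 2) ≤ Real.sin x ∧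
      Real.sin x ≤ Real.cos (u / 2) * (x - u / 2) + Real.sin (u / 2) :=
  sin_envelope_general u x hu1 hx
end

section
/- Let Y, T, W_ij, S_ij ∈ ℂ and W_ii, b ∈ ℝ with T ≠ 0. If S_ij = (conj(Y) − i·b/2)·W_ii/|T|² − conj(Y)·W_ij/conj(T), then (as an identity in ℂ, with real numbers coerced) |S_ij|² = |Y|²·( W_ii²/|T|⁴ − (W_ii/|T|²)·(W_ij/conj(T)) − (W_ii/|T|²)·(conj(W_ij)/T) + |W_ij|²/|T|² ) − (b/2)²·W_ii²/|T|⁴ − b·(W_ii/|T|²)·Im(S_ij). -/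
/-!
With `β = b W_ii / (2|T|²)`, the shifted flow `S_ij + iβ` equals `conj Y · (W_ii/|T|² - W_ij/conj T)`,
so its squared modulus is `|Y|²` times the expanded square of the bracket; on the other hand
`|S_ij + iβ|² = |S_ij|² + β² + 2β Im S_ij`.
-/

open Complex ComplexConjugate

namespace Complex

theorem sq_norm_add_ofReal_mul_I (z : ℂ) (β : ℝ) :
    ‖z + β * I‖ ^ 2 = ‖z‖ ^ 2 + β ^ 2 + 2 * β * z.im := by
  simp only [Complex.sq_norm, normSq_apply, add_re, add_im, re_ofReal_mul, im_ofReal_mul, I_re, I_im]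
  ring

theorem div_conj_mul_conj_div (w t : ℂ) :
    w / conj t * (conj w / t) = ((‖w‖ ^ 2 : ℝ) : ℂ) / ((‖t‖ ^ 2 : ℝ) : ℂ) := by
  push_cast
  rw [div_mul_div_comm, mul_comm (conj t), mul_conj', mul_conj']

theorem ofReal_sq_norm_ofReal_sub_div_conj (c : ℝ) (w t : ℂ) :
    ((‖c - w / conj t‖ ^ 2 : ℝ) : ℂ)
      = c ^ 2 - c * (w / conj t) - c * (conj w / t) + ((‖w‖ ^ 2 : ℝ) : ℂ) / ((‖t‖ ^ 2 : ℝ) : ℂ) := by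
  rw [← div_conj_mul_conj_div, ofReal_pow, ← mul_conj']
  simp only [map_sub, map_div₀, conj_ofReal, conj_conj]
  ring

end Complex

theorem abs_sq_power_ext_general (Y T Wij Sij : ℂ) (Wii b : ℝ)
    (hS : Sij = ((starRingEnd ℂ) Y - Complex.I * (b : ℂ) / 2) * (Wii : ℂ)
        / ((‖T‖ : ℝ) ^ 2 : ℂ)
      - (starRingEnd ℂ) Y * Wij / (starRingEnd ℂ) T) :
    ((‖Sij‖ : ℝ) ^ 2 : ℂ) =
      ((‖Y‖ : ℝ) ^ 2 : ℂ) *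
        ( (Wii : ℂ) ^ 2 / ((‖T‖ : ℝ) ^ 4 : ℂ)
          - ((Wii : ℂ) / ((‖T‖ : ℝ) ^ 2 : ℂ)) * (Wij / (starRingEnd ℂ) T)
          - ((Wii : ℂ) / ((‖T‖ : ℝ) ^ 2 : ℂ)) * ((starRingEnd ℂ) Wij / T)
          + ((‖Wij‖ : ℝ) ^ 2 : ℂ) / ((‖T‖ : ℝ) ^ 2 : ℂ) )
      - ((b : ℂ) / 2) ^ 2 * (Wii : ℂ) ^ 2 / ((‖T‖ : ℝ) ^ 4 : ℂ)
      - (b : ℂ) * ((Wii : ℂ) / ((‖T‖ : ℝ) ^ 2 : ℂ)) * (Sij.im : ℂ) := by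
  set c : ℝ := Wii / ‖T‖ ^ 2 with hc
  set β : ℝ := b * c / 2 with hβ
  have hshift : Sij + β * I = conj Y * (c - Wij / conj T) := by
    rw [hS, hβ, hc]
    push_cast
    ring
  have hnorm : ‖Sij‖ ^ 2 = ‖Y‖ ^ 2 * ‖c - Wij / conj T‖ ^ 2 - β ^ 2 - 2 * β * Sij.im := by
    have h := sq_norm_add_ofReal_mul_I Sij β
    rw [hshift, norm_mul, norm_conj, mul_pow] at h
    linarith
  rw [← ofReal_pow, hnorm, ofReal_sub, ofReal_sub, ofReal_mul,
    ofReal_sq_norm_ofReal_sub_div_conj]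
  push_cast [hβ, hc]
  ring

/-- Extended Property 1: the absolute square of power, with tap ratio and line charging. -/
theorem abs_sq_power_ext (Y T Wij Sij : ℂ) (Wii b : ℝ) (hT : T ≠ 0)
    (hS : Sij = ((starRingEnd ℂ) Y - Complex.I * (b : ℂ) / 2) * (Wii : ℂ)
        / ((‖T‖ : ℝ) ^ 2 : ℂ)
      - (starRingEnd ℂ) Y * Wij / (starRingEnd ℂ) T) :
    ((‖Sij‖ : ℝ) ^ 2 : ℂ) =
      ((‖Y‖ : ℝ) ^ 2 : ℂ) *
        ( (Wii : ℂ) ^ 2 / ((‖T‖ : ℝ) ^ 4 : ℂ)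
          - ((Wii : ℂ) / ((‖T‖ : ℝ) ^ 2 : ℂ)) * (Wij / (starRingEnd ℂ) T)
          - ((Wii : ℂ) / ((‖T‖ : ℝ) ^ 2 : ℂ)) * ((starRingEnd ℂ) Wij / T)
          + ((‖Wij‖ : ℝ) ^ 2 : ℂ) / ((‖T‖ : ℝ) ^ 2 : ℂ) )
      - ((b : ℂ) / 2) ^ 2 * (Wii : ℂ) ^ 2 / ((‖T‖ : ℝ) ^ 4 : ℂ)
      - (b : ℂ) * ((Wii : ℂ) / ((‖T‖ : ℝ) ^ 2 : ℂ)) * (Sij.im : ℂ) :=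
  abs_sq_power_ext_general Y T Wij Sij Wii b hS
end

section
/- Let Y, Z, T, W_ij, S_ij ∈ ℂ and W_ii, b ∈ ℝ with Y ≠ 0, Z = Y⁻¹, and T ≠ 0. If S_ij = (conj(Y) − i·b/2)·W_ii/|T|² − conj(Y)·W_ij/conj(T), then (as an identity in ℂ, with real numbers coerced) |W_ij|² = (1 − b·Im(Z))·W_ii²/|T|² − W_ii·conj(Z)·S_ij − W_ii·Z·conj(S_ij) + |Z|²·( |T|²·|S_ij|² + (b/2)²·W_ii²/|T|² + W_ii·b·Im(S_ij) ). -/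
/-!
Solving the flow equation for the voltage product gives
`W_ij = conj T * (W_ii / |T|² - conj Z * (S_ij + i r))` with `r = b W_ii / (2 |T|²)` real.
Expanding the absolute square of this expression, the cross terms in `r` produce the
`Im Z` and `Im S_ij` terms.
-/

open ComplexConjugate Complex

theorem Complex.ofReal_norm_conj_mul_sub_sq (t z a : ℂ) (x : ℝ) (ht : t ≠ 0) :
    (‖conj t * (x / ‖t‖ ^ 2 - conj z * a)‖ : ℂ) ^ 2 =
      x ^ 2 / ‖t‖ ^ 2 - x * (conj z * a + z * conj a) + ‖t‖ ^ 2 * ‖z‖ ^ 2 * ‖a‖ ^ 2 := by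
  have ht' : conj t ≠ 0 := (map_ne_zero _).mpr ht
  simp only [← mul_conj', map_mul, map_sub, map_div₀, conj_conj, conj_ofReal]
  field_simp
  ring

theorem Complex.conj_mul_add_mul_conj_add_I_mul_ofReal (z s : ℂ) (r : ℝ) :
    conj z * (s + I * r) + z * conj (s + I * r) = conj z * s + z * conj s + 2 * r * z.im := by
  rw [im_eq_sub_conj]
  simp only [map_add, map_mul, conj_I, conj_ofReal]
  field_simp
  linear_combination ((conj z - z) * r) * I_sq

theorem Complex.ofReal_norm_add_I_mul_ofReal_sq (s : ℂ) (r : ℝ) :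
    (‖s + I * r‖ : ℂ) ^ 2 = ‖s‖ ^ 2 + r ^ 2 + 2 * r * s.im := by
  norm_cast
  simp only [Complex.sq_norm, normSq_apply, add_re, add_im, mul_re, mul_im, I_re, I_im, ofReal_re,
    ofReal_im]
  ring

theorem voltage_product_eq_of_power_flow (Y T Wij Sij : ℂ) (Wii b : ℝ) (hY : Y ≠ 0) (hT : T ≠ 0)
    (hS : Sij = (conj Y - I * b / 2) * Wii / (‖T‖ : ℂ) ^ 2 - conj Y * Wij / conj T) :
    Wij = conj T * (Wii / ‖T‖ ^ 2 - conj Y⁻¹ * (Sij + I * ((b * Wii / (2 * ‖T‖ ^ 2) : ℝ) : ℂ))) := by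
  have hYc : conj Y ≠ 0 := (map_ne_zero _).mpr hY
  have hTc : conj T ≠ 0 := (map_ne_zero _).mpr hT
  subst hS
  rw [map_inv₀]
  push_cast
  field_simp
  ring

/-- Extended Property 2: the absolute square of the voltage product. -/
theorem abs_sq_voltage_product_ext (Y Z T Wij Sij : ℂ) (Wii b : ℝ)
    (hY : Y ≠ 0) (hZ : Z = Y⁻¹) (hT : T ≠ 0)
    (hS : Sij = ((starRingEnd ℂ) Y - Complex.I * (b : ℂ) / 2) * (Wii : ℂ)
        / ((‖T‖ : ℝ) ^ 2 : ℂ)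
      - (starRingEnd ℂ) Y * Wij / (starRingEnd ℂ) T) :
    ((‖Wij‖ : ℝ) ^ 2 : ℂ) =
      (1 - (b : ℂ) * (Z.im : ℂ)) * (Wii : ℂ) ^ 2 / ((‖T‖ : ℝ) ^ 2 : ℂ)
      - (Wii : ℂ) * (starRingEnd ℂ) Z * Sij
      - (Wii : ℂ) * Z * (starRingEnd ℂ) Sij
      + ((‖Z‖ : ℝ) ^ 2 : ℂ) *
          ( ((‖T‖ : ℝ) ^ 2 : ℂ) * ((‖Sij‖ : ℝ) ^ 2 : ℂ)
            + ((b : ℂ) / 2) ^ 2 * (Wii : ℂ) ^ 2 / ((‖T‖ : ℝ) ^ 2 : ℂ)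
            + (Wii : ℂ) * (b : ℂ) * (Sij.im : ℂ) ) := by
  have hT' : (‖T‖ : ℂ) ≠ 0 := by simpa using hT
  rw [voltage_product_eq_of_power_flow Y T Wij Sij Wii b hY hT hS, ← hZ,
    ofReal_norm_conj_mul_sub_sq _ _ _ _ hT, conj_mul_add_mul_conj_add_I_mul_ofReal,
    ofReal_norm_add_I_mul_ofReal_sq]
  push_cast
  field_simp
  ring
end

section
/- Let Y, Z, T, W_ij, S_ij ∈ ℂ and W_ii, W_jj, l, b ∈ ℝ with Y ≠ 0, Z = Y⁻¹, and T ≠ 0. Assume S_ij = (conj(Y) − i·b/2)·W_ii/|T|² − conj(Y)·W_ij/conj(T) and (l : ℂ) = |Y|²·( W_ii/|T|² − W_ij/conj(T) − conj(W_ij)/T + W_jj ) − (b/2)²·W_ii/|T|² − b·Im(S_ij). Then (as an identity in ℂ, with real numbers coerced) W_jj = (1 − b·Im(Z))·W_ii/|T|² − conj(Z)·S_ij − Z·conj(S_ij) + |Z|²·( l + (b/2)²·W_ii/|T|² + b·Im(S_ij) ). -/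
/-!
Put `V = W_ii / |T|²` and `w = W_ij / conj T`, so that `S_ij = (conj Y - i b/2) V - conj Y w`.
Since `conj Z · conj Y = 1`, the cross term `conj Z S_ij + Z conj S_ij = 2 Re (conj Z S_ij)` equals
`2 (V - (b/2) V Im Z - Re w)`, while the current identity reads
`l + (b/2)² V + b Im S_ij = |Y|² (V - 2 Re w + W_jj)`. Substituting both and using `|Z|² |Y|² = 1`,
the right-hand side collapses to `W_jj`.
-/

open ComplexConjugate Complex

lemma re_conj_inv_mul_flow (Y w : ℂ) (V b : ℝ) (hY : Y ≠ 0) :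
    (conj Y⁻¹ * ((conj Y - I * b / 2) * V - conj Y * w)).re
      = V - b / 2 * V * (Y⁻¹).im - w.re := by
  have hunit : conj Y⁻¹ * conj Y = 1 := by rw [← map_mul, inv_mul_cancel₀ hY, map_one]
  have hexpand : conj Y⁻¹ * ((conj Y - I * b / 2) * V - conj Y * w)
      = V - I * (b / 2 * V : ℝ) * conj Y⁻¹ - w := by
    push_cast
    linear_combination (V - w) * hunit
  rw [hexpand]
  simp only [sub_re, ofReal_re, mul_re, mul_im, I_re, I_im, ofReal_im, conj_re, conj_im]
  ring

lemma conj_mul_add_mul_conj (z s : ℂ) : conj z * s + z * conj s = 2 * (conj z * s).re := by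
  rw [← ofReal_ofNat, ← ofReal_mul, ← add_conj, map_mul, conj_conj]

lemma norm_inv_sq_mul_norm_sq {Y : ℂ} (hY : Y ≠ 0) : (‖Y⁻¹‖ : ℂ) ^ 2 * (‖Y‖ : ℂ) ^ 2 = 1 := by
  rw [← mul_pow, ← ofReal_mul, norm_inv, inv_mul_cancel₀ (norm_ne_zero_iff.mpr hY)]
  simp

theorem voltage_drop_ext_general (Y Z T Wij Sij : ℂ) (Wii Wjj l b : ℝ)
    (hY : Y ≠ 0) (hZ : Z = Y⁻¹)
    (hS : Sij = ((starRingEnd ℂ) Y - Complex.I * (b : ℂ) / 2) * (Wii : ℂ)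
        / ((‖T‖ : ℝ) ^ 2 : ℂ)
      - (starRingEnd ℂ) Y * Wij / (starRingEnd ℂ) T)
    (hl : (l : ℂ) = ((‖Y‖ : ℝ) ^ 2 : ℂ) *
        ( (Wii : ℂ) / ((‖T‖ : ℝ) ^ 2 : ℂ)
          - Wij / (starRingEnd ℂ) T
          - (starRingEnd ℂ) Wij / T
          + (Wjj : ℂ) )
      - ((b : ℂ) / 2) ^ 2 * (Wii : ℂ) / ((‖T‖ : ℝ) ^ 2 : ℂ)
      - (b : ℂ) * (Sij.im : ℂ)) :
    (Wjj : ℂ) =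
      (1 - (b : ℂ) * (Z.im : ℂ)) * (Wii : ℂ) / ((‖T‖ : ℝ) ^ 2 : ℂ)
      - (starRingEnd ℂ) Z * Sij - Z * (starRingEnd ℂ) Sij
      + ((‖Z‖ : ℝ) ^ 2 : ℂ) *
          ( (l : ℂ)
            + ((b : ℂ) / 2) ^ 2 * (Wii : ℂ) / ((‖T‖ : ℝ) ^ 2 : ℂ)
            + (b : ℂ) * (Sij.im : ℂ) ) := by
  subst hZ
  set V : ℝ := Wii / ‖T‖ ^ 2 with hV
  set w : ℂ := Wij / conj T
  have hVc : (V : ℂ) = Wii / (‖T‖ : ℂ) ^ 2 := by push_cast [hV]; rfl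
  have hcross : conj Y⁻¹ * Sij + Y⁻¹ * conj Sij = 2 * (V - b / 2 * V * (Y⁻¹).im - w.re) := by
    have hS' : Sij = (conj Y - I * b / 2) * V - conj Y * w := by
      rw [hS, hVc]; ring
    rw [conj_mul_add_mul_conj, hS', re_conj_inv_mul_flow Y w V b hY]
    push_cast; ring
  have hcurrent : (l : ℂ) + (b / 2) ^ 2 * V + b * Sij.im = ‖Y‖ ^ 2 * (V - 2 * w.re + Wjj) := by
    have hw : w + conj w = 2 * w.re := by rw [add_conj, ofReal_mul, ofReal_ofNat]
    have hwc : conj w = conj Wij / T := by rw [map_div₀, conj_conj]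
    rw [hl, hVc, ← hw, hwc]
    ring
  linear_combination hcross - (‖Y⁻¹‖ : ℂ) ^ 2 * hcurrent
    + (1 - b * (Y⁻¹).im + (‖Y⁻¹‖ : ℂ) ^ 2 * (b / 2) ^ 2) * hVc
    - (V - 2 * w.re + Wjj) * norm_inv_sq_mul_norm_sq hY

/-- Extended Property 4: the voltage drop identity. -/
theorem voltage_drop_ext (Y Z T Wij Sij : ℂ) (Wii Wjj l b : ℝ)
    (hY : Y ≠ 0) (hZ : Z = Y⁻¹) (hT : T ≠ 0)
    (hS : Sij = ((starRingEnd ℂ) Y - Complex.I * (b : ℂ) / 2) * (Wii : ℂ)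
        / ((‖T‖ : ℝ) ^ 2 : ℂ)
      - (starRingEnd ℂ) Y * Wij / (starRingEnd ℂ) T)
    (hl : (l : ℂ) = ((‖Y‖ : ℝ) ^ 2 : ℂ) *
        ( (Wii : ℂ) / ((‖T‖ : ℝ) ^ 2 : ℂ)
          - Wij / (starRingEnd ℂ) T
          - (starRingEnd ℂ) Wij / T
          + (Wjj : ℂ) )
      - ((b : ℂ) / 2) ^ 2 * (Wii : ℂ) / ((‖T‖ : ℝ) ^ 2 : ℂ)
      - (b : ℂ) * (Sij.im : ℂ)) :
    (Wjj : ℂ) =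
      (1 - (b : ℂ) * (Z.im : ℂ)) * (Wii : ℂ) / ((‖T‖ : ℝ) ^ 2 : ℂ)
      - (starRingEnd ℂ) Z * Sij - Z * (starRingEnd ℂ) Sij
      + ((‖Z‖ : ℝ) ^ 2 : ℂ) *
          ( (l : ℂ)
            + ((b : ℂ) / 2) ^ 2 * (Wii : ℂ) / ((‖T‖ : ℝ) ^ 2 : ℂ)
            + (b : ℂ) * (Sij.im : ℂ) ) :=
  voltage_drop_ext_general Y Z T Wij Sij Wii Wjj l b hY hZ hS hl
end

section
/- Let Y, Z, T, W_ij ∈ ℂ and W_ii, W_jj, b ∈ ℝ with Y ≠ 0, Z = Y⁻¹, and T ≠ 0, and define S_ij = (conj(Y) − i·b/2)·W_ii/|T|² − conj(Y)·W_ij/conj(T) and S_ji = (conj(Y) − i·b/2)·W_jj − conj(Y)·conj(W_ij)/T (real numbers coerced to ℂ). Then |W_ij|² ≤ W_ii·W_jj holds if and only if there exists l ∈ ℝ such that S_ij + S_ji = Z·( l + (b/2)²·W_ii/|T|² + b·Im(S_ij) ) − i·(b/2)·( W_ii/|T|² + W_jj ) and |S_ij|² ≤ (W_ii/|T|²)·l.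 -/
/-!
Normalising by the tap ratio, put `a = W_ii / |T|²` and `w = W_ij / T*`; then `S_ij` and `S_ji` are
the flows `(Y* - i b/2) a - Y* w` and `(Y* - i b/2) W_jj - Y* w*` of a line without transformer.
Their sum is `Y* (a + W_jj - 2 Re w) - i (b/2) (a + W_jj)`, so, as `Z = Y⁻¹`, the line-loss equation
has exactly one real solution `l`, and for it `a l - |S_ij|² = |Y|² (a W_jj - |w|²)`.
Since `|Y|² > 0` and `a W_jj - |w|² = (W_ii W_jj - |W_ij|²) / |T|²`, both cone constraints say the same.
-/

open Complex ComplexConjugate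

section LineFlow

/-- The power flow into a line with admittance `Y` and charging `b`, from a bus with squared voltage
magnitude `a`, given the voltage product `w`. -/
noncomputable def lineFlow (Y : ℂ) (b a : ℝ) (w : ℂ) : ℂ :=
  (conj Y - I * b / 2) * a - conj Y * w

/-- For rank-one data `a = |V_i|²`, `c = |V_j|²`, `w = V_i V_j*` this is `|I_ij|²`, the squared
current entering the line at bus `i`. -/
noncomputable def lineLoss (Y : ℂ) (b a c : ℝ) (w : ℂ) : ℝ :=
  normSq Y * (a + c - 2 * w.re) - (b / 2) ^ 2 * a - b * (lineFlow Y b a w).im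

variable (Y w : ℂ) (b a c : ℝ)

theorem lineFlow_add_lineFlow_conj :
    lineFlow Y b a w + lineFlow Y b c (conj w)
      = conj Y * ((a + c - 2 * w.re : ℝ) : ℂ) - I * (b / 2) * (a + c) := by
  rw [lineFlow, lineFlow]
  push_cast
  rw [re_eq_add_conj]
  ring

theorem lineFlow_add_lineFlow_conj_eq_iff_eq_lineLoss (hY : Y ≠ 0) (l : ℝ) :
    lineFlow Y b a w + lineFlow Y b c (conj w)
        = Y⁻¹ * (l + (b / 2) ^ 2 * a + b * (lineFlow Y b a w).im) - I * (b / 2) * (a + c)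
      ↔ l = lineLoss Y b a c w := by
  have hrhs : (l : ℂ) + (b / 2) ^ 2 * a + b * (lineFlow Y b a w).im
      = ((l + (b / 2) ^ 2 * a + b * (lineFlow Y b a w).im : ℝ) : ℂ) := by
    push_cast
    ring
  rw [lineFlow_add_lineFlow_conj, sub_left_inj, eq_inv_mul_iff_mul_eq₀ hY, ← mul_assoc, mul_conj,
    ← ofReal_mul, hrhs, ofReal_inj, lineLoss]
  constructor <;> intro h <;> linarith

theorem mul_lineLoss_sub_sq_norm_lineFlow :
    a * lineLoss Y b a c w - ‖lineFlow Y b a w‖ ^ 2 = normSq Y * (a * c - ‖w‖ ^ 2) := by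
  simp only [lineLoss, lineFlow, Complex.sq_norm, normSq_apply, sub_re, sub_im, mul_re, mul_im,
    conj_re, conj_im, I_re, I_im, div_ofNat_re, div_ofNat_im, ofReal_re, ofReal_im]
  ring

theorem sq_norm_le_mul_iff_exists_lineLoss (hY : Y ≠ 0) :
    ‖w‖ ^ 2 ≤ a * c ↔
      ∃ l : ℝ, lineFlow Y b a w + lineFlow Y b c (conj w)
          = Y⁻¹ * (l + (b / 2) ^ 2 * a + b * (lineFlow Y b a w).im) - I * (b / 2) * (a + c) ∧
        ‖lineFlow Y b a w‖ ^ 2 ≤ a * l := by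
  simp only [lineFlow_add_lineFlow_conj_eq_iff_eq_lineLoss Y w b a c hY, exists_eq_left]
  rw [← sub_nonneg, ← mul_nonneg_iff_of_pos_left (normSq_pos.2 hY),
    ← mul_lineLoss_sub_sq_norm_lineFlow, sub_nonneg]

end LineFlow

theorem sq_norm_div_le_div_sq_norm_mul_iff {𝕜 : Type*} [NormedDivisionRing 𝕜] {x y : 𝕜}
    (hy : y ≠ 0) (r s : ℝ) : ‖x / y‖ ^ 2 ≤ r / ‖y‖ ^ 2 * s ↔ ‖x‖ ^ 2 ≤ r * s := by
  rw [norm_div, div_pow, div_mul_eq_mul_div, div_le_div_iff_of_pos_right (by positivity)]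

/-- Appendix theorem: W-E-SOC is equivalent to C-E-SOC. -/
theorem wesoc_iff_cesoc (Y Z T Wij Sij Sji : ℂ) (Wii Wjj b : ℝ)
    (hY : Y ≠ 0) (hZ : Z = Y⁻¹) (hT : T ≠ 0)
    (hSij : Sij = ((starRingEnd ℂ) Y - Complex.I * (b : ℂ) / 2) * (Wii : ℂ)
        / ((‖T‖ : ℝ) ^ 2 : ℂ)
      - (starRingEnd ℂ) Y * Wij / (starRingEnd ℂ) T)
    (hSji : Sji = ((starRingEnd ℂ) Y - Complex.I * (b : ℂ) / 2) * (Wjj : ℂ)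
      - (starRingEnd ℂ) Y * (starRingEnd ℂ) Wij / T) :
    ‖Wij‖ ^ 2 ≤ Wii * Wjj ↔
      ∃ l : ℝ,
        Sij + Sji = Z * ( (l : ℂ)
            + ((b : ℂ) / 2) ^ 2 * (Wii : ℂ) / ((‖T‖ : ℝ) ^ 2 : ℂ)
            + (b : ℂ) * (Sij.im : ℂ) )
          - Complex.I * ((b : ℂ) / 2) *
              ( (Wii : ℂ) / ((‖T‖ : ℝ) ^ 2 : ℂ) + (Wjj : ℂ) ) ∧
        ‖Sij‖ ^ 2 ≤ (Wii / ‖T‖ ^ 2) * l := by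
  have hWii : (Wii : ℂ) / ((‖T‖ : ℝ) ^ 2 : ℂ) = ((Wii / ‖T‖ ^ 2 : ℝ) : ℂ) := by push_cast; rfl
  have hnorm : ‖Wij‖ ^ 2 ≤ Wii * Wjj ↔ ‖Wij / conj T‖ ^ 2 ≤ Wii / ‖T‖ ^ 2 * Wjj := by
    rw [← norm_conj T]
    exact (sq_norm_div_le_div_sq_norm_mul_iff ((map_ne_zero _).2 hT) Wii Wjj).symm
  have hSij' : Sij = lineFlow Y b (Wii / ‖T‖ ^ 2) (Wij / conj T) := by
    rw [hSij, lineFlow, mul_div_assoc, hWii]; ring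
  have hSji' : Sji = lineFlow Y b Wjj (conj (Wij / conj T)) := by
    rw [hSji, lineFlow, map_div₀, conj_conj]; ring
  rw [hnorm, mul_div_assoc, hWii, hZ, hSij', hSji']
  exact sq_norm_le_mul_iff_exists_lineLoss Y _ b _ Wjj hY
end
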